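/- arXiv:2404.13527 — 2 statements merged into one kernel-verified Lean document; each statement's English description precedes it below -/
import Mathlib

section
/- Let G be a finite simple graph that is the union of two odd cycles whose intersection is exactly one vertex (they share exactly one vertex and no edges). Then G is not strongly EFX-orientable. -/
open SimpleGraph
open scoped Classical

variable {V : Type*}

def bundleSet (G : SimpleGraph V) (head : Sym2 V → V) (v : V) : Set (Sym2 V) :=
  {e ∈ G.edgeSet | head e = v}

def IsEFXOrientation (G : SimpleGraph V) (f : V → Set (Sym2 V) → NNReal)
    (head : Sym2 V → V) : Prop :=
  (∀ e ∈ G.edgeSet, head e ∈ e) ∧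
  ∀ a b : V, ∀ g ∈ bundleSet G head b,
    f a (bundleSet G head b \ {g}) ≤ f a (bundleSet G head a)

def StronglyEFXOrientable [Fintype V] (G : SimpleGraph V) : Prop :=
  ∀ f : V → Set (Sym2 V) → NNReal,
    (∀ a, Monotone (f a)) →
    (∀ a X, f a X = f a (X ∩ G.incidenceSet a)) →
    ∃ head : Sym2 V → V, IsEFXOrientation G f head

noncomputable def bundle [Fintype V] (G : SimpleGraph V) (head : Sym2 V → V) (v : V) :
    Finset (Sym2 V) :=
  Finset.univ.filter fun e => e ∈ G.edgeSet ∧ head e = v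

def IsEFX01Orientation [Fintype V] (G : SimpleGraph V) (w : V → Sym2 V → ℕ)
    (head : Sym2 V → V) : Prop :=
  (∀ e ∈ G.edgeSet, head e ∈ e) ∧
  ∀ a b : V, ∀ g ∈ bundle G head b,
    ∑ e ∈ (bundle G head b).erase g, w a e ≤ ∑ e ∈ bundle G head a, w a e

def ZeroOneStronglyEFXOrientable [Fintype V] (G : SimpleGraph V) : Prop :=
  ∀ w : V → Sym2 V → ℕ, (∀ a e, w a e ≤ 1) → (∀ a e, a ∉ e → w a e = 0) →
    ∃ head : Sym2 V → V, IsEFX01Orientation G w head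

def IndepOn (G : SimpleGraph V) (s : Set V) : Prop :=
  ∀ a ∈ s, ∀ b ∈ s, ¬ G.Adj a b

/-- The edge set of the cycle traced by an injective map `c : ZMod n → V`
(for `n ≥ 3` this is an `n`-cycle on the image of `c`). -/
def cycleEdges {n : ℕ} (c : ZMod n → V) : Set (Sym2 V) :=
  Set.range fun i : ZMod n => s(c i, c (i + 1))


/-!
Each agent gets the 0/1 valuation "my bundle contains an incident edge of `W`", where `W`
consists of the edges at odd position on the first cycle and at even position on the second,
counted from the shared vertex `a`; so `a` wants none of its edges on the first cycle and both
of them on the second. The EFX constraint that drives everything: an agent holding nothing it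
wants forces every bundle containing one of its wanted edges to be a singleton. Along a path of
degree-two vertices whose edges alternate between unwanted and wanted, this propagates one
orientation from edge to edge. On the first cycle it forces `a` to hold an unwanted edge. Then
both wanted edges at `a` point away from `a`, so `a` holds nothing it wants, and propagating
from the two neighbours of `a` orients the last unwanted edge of the second cycle both ways.
-/

noncomputable def hitValuation (D X : Set (Sym2 V)) : NNReal :=
  if (X ∩ D).Nonempty then 1 else 0

lemma hitValuation_mono (D : Set (Sym2 V)) : Monotone (hitValuation D) := by
  intro X Y hXY
  unfold hitValuation
  split_ifs with hX hY
  · exact le_rfl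
  · exact absurd (hX.mono (Set.inter_subset_inter_left D hXY)) hY
  all_goals exact zero_le

lemma hitValuation_eq_zero {D X : Set (Sym2 V)} (h : Disjoint X D) : hitValuation D X = 0 :=
  if_neg (Set.not_nonempty_iff_eq_empty.2 (Set.disjoint_iff_inter_eq_empty.1 h))

lemma hitValuation_eq_one {D X : Set (Sym2 V)} {e : Sym2 V} (hX : e ∈ X) (hD : e ∈ D) :
    hitValuation D X = 1 :=
  if_pos ⟨e, hX, hD⟩

lemma StronglyEFXOrientable.exists_isEFXOrientation_hitValuation [Fintype V]
    {G : SimpleGraph V} (hG : StronglyEFXOrientable G) (W : Set (Sym2 V)) :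
    ∃ head, IsEFXOrientation G (fun x => hitValuation (W ∩ G.incidenceSet x)) head :=
  hG _ (fun x => hitValuation_mono _) fun x X => by
    simp only [hitValuation, Set.inter_assoc, Set.inter_left_comm (G.incidenceSet x) W,
      Set.inter_self]

/-- A thread of length `L`: a walk `p 0, …, p L` whose inner vertices lie on no other edge. -/
structure IsThread (G : SimpleGraph V) (p : ℕ → V) (L : ℕ) : Prop where
  adj : ∀ i < L, G.Adj (p i) (p (i + 1))
  incidenceSet_subset : ∀ i, i + 1 < L →
    G.incidenceSet (p (i + 1)) ⊆ {s(p i, p (i + 1)), s(p (i + 1), p (i + 2))}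

lemma IsThread.tail {G : SimpleGraph V} {p : ℕ → V} {L : ℕ} (hp : IsThread G p L) :
    IsThread G (fun i => p (i + 1)) (L - 1) :=
  ⟨fun i hi => hp.adj (i + 1) (by omega), fun i hi => hp.incidenceSet_subset (i + 1) (by omega)⟩

section EFX

variable {G : SimpleGraph V} {head : Sym2 V → V} {W : Set (Sym2 V)}

lemma bundleSet_subset_incidenceSet (hhead : ∀ e ∈ G.edgeSet, head e ∈ e) (x : V) :
    bundleSet G head x ⊆ G.incidenceSet x :=
  fun e he => ⟨he.1, he.2 ▸ hhead e he.1⟩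

lemma head_eq_of_adj (hhead : ∀ e ∈ G.edgeSet, head e ∈ e) {x y : V} (hxy : G.Adj x y) :
    head s(x, y) = x ∨ head s(x, y) = y :=
  Sym2.mem_iff.1 (hhead _ hxy)

lemma IsEFXOrientation.bundleSet_subset_singleton {D : V → Set (Sym2 V)}
    (hefx : IsEFXOrientation G (fun x => hitValuation (D x)) head) {x y : V} {e : Sym2 V}
    (hy : Disjoint (bundleSet G head y) (D y)) (he : e ∈ bundleSet G head x) (heD : e ∈ D y) :
    bundleSet G head x ⊆ {e} := by
  intro e' he'
  by_contra hne
  have henvy : hitValuation (D y) _ ≤ hitValuation (D y) _ := hefx.2 y x e' he'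
  rw [hitValuation_eq_zero hy, hitValuation_eq_one (X := _ \ {e'}) ⟨he, Ne.symm hne⟩ heD] at henvy
  exact one_ne_zero (le_antisymm henvy zero_le)

lemma IsEFXOrientation.head_eq_right_of_mem_bundleSet
    (hefx : IsEFXOrientation G (fun x => hitValuation (W ∩ G.incidenceSet x)) head)
    {x y : V} {E e' : Sym2 V} (hE : E ∈ bundleSet G head x) (hEW : E ∉ W) (hxy : G.Adj x y)
    (hW : s(x, y) ∈ W) (hy : G.incidenceSet y ⊆ {s(x, y), e'}) (he' : e' ∉ W) :
    head s(x, y) = y := by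
  refine (head_eq_of_adj hefx.1 hxy).resolve_left fun hx => ?_
  have hy_empty : Disjoint (bundleSet G head y) (W ∩ G.incidenceSet y) := by
    refine Set.disjoint_left.2 fun f hf hfW => ?_
    rcases hy (bundleSet_subset_incidenceSet hefx.1 y hf) with rfl | rfl
    · exact hxy.ne (hx.symm.trans hf.2)
    · exact he' hfW.1
  have hx_single := hefx.bundleSet_subset_singleton (D := fun x => W ∩ G.incidenceSet x)
    hy_empty ⟨hxy, hx⟩ ⟨hW, hxy, Sym2.mem_mk_right x y⟩ hE
  exact hEW (Set.mem_singleton_iff.1 hx_single ▸ hW)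

lemma IsEFXOrientation.head_eq_right_of_disjoint
    (hefx : IsEFXOrientation G (fun x => hitValuation (W ∩ G.incidenceSet x)) head)
    {x y z : V} (hx : Disjoint (bundleSet G head x) W) (hxy : G.Adj x y) (hW : s(x, y) ∈ W)
    (hhead : head s(x, y) = y) (hyz : G.Adj y z) (hyzW : s(y, z) ∉ W) :
    head s(y, z) = z := by
  have hy_single := hefx.bundleSet_subset_singleton (D := fun x => W ∩ G.incidenceSet x)
    (hx.mono_right Set.inter_subset_left) ⟨hxy, hhead⟩ ⟨hW, hxy, Sym2.mem_mk_left x y⟩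
  refine (head_eq_of_adj hefx.1 hyz).resolve_left fun hy => ?_
  exact hyzW (Set.mem_singleton_iff.1 (hy_single ⟨hyz, hy⟩) ▸ hW)

/-- Each edge in `W` must point away from the holder of the previous edge, who then holds
nothing it wants, so the next edge outside `W` points forward as well. -/
lemma IsEFXOrientation.head_thread_of_even
    (hefx : IsEFXOrientation G (fun x => hitValuation (W ∩ G.incidenceSet x)) head)
    {p : ℕ → V} {L : ℕ} (hp : IsThread G p L) (hW : ∀ i < L, s(p i, p (i + 1)) ∈ W ↔ Odd i)
    (h0 : head s(p 0, p 1) = p 1) {i : ℕ} (hi : i < L) (heven : Even i) :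
    head s(p i, p (i + 1)) = p (i + 1) := by
  obtain ⟨k, rfl⟩ := heven
  induction k with
  | zero => exact h0
  | succ k ih =>
    have hprev := ih (by omega)
    have hnotW₀ : s(p (k + k), p (k + k + 1)) ∉ W :=
      fun h => Nat.not_odd_iff_even.2 ⟨k, rfl⟩ ((hW _ (by omega)).1 h)
    have hW₁ : s(p (k + k + 1), p (k + k + 2)) ∈ W := (hW _ (by omega)).2 ⟨k, by ring⟩
    have hnotW₂ : s(p (k + k + 2), p (k + k + 3)) ∉ W :=
      fun h => Nat.not_odd_iff_even.2 ⟨k + 1, by ring⟩ ((hW _ (by omega)).1 h)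
    have hhead₁ : head s(p (k + k + 1), p (k + k + 2)) = p (k + k + 2) :=
      hefx.head_eq_right_of_mem_bundleSet ⟨hp.adj _ (by omega), hprev⟩ hnotW₀
        (hp.adj _ (by omega)) hW₁ (hp.incidenceSet_subset _ (by omega)) hnotW₂
    have hdisj : Disjoint (bundleSet G head (p (k + k + 1))) W := by
      refine Set.disjoint_left.2 fun f hf hfW => ?_
      rcases hp.incidenceSet_subset (k + k) (by omega)
        (bundleSet_subset_incidenceSet hefx.1 _ hf) with rfl | rfl
      · exact hnotW₀ hfW
      · exact (hp.adj (k + k + 1) (by omega)).ne (hf.2.symm.trans hhead₁)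
    rw [show k + 1 + (k + 1) = k + k + 2 by ring]
    exact hefx.head_eq_right_of_disjoint hdisj (hp.adj _ (by omega)) hW₁ hhead₁
      (hp.adj _ (by omega)) hnotW₂

lemma IsEFXOrientation.not_bundleSet_union_subset_of_odd_thread
    (hefx : IsEFXOrientation G (fun x => hitValuation (W ∩ G.incidenceSet x)) head)
    {p : ℕ → V} {k : ℕ} (hp : IsThread G p (2 * k + 1))
    (hpW : ∀ i < 2 * k + 1, s(p i, p (i + 1)) ∈ W ↔ Odd i) :
    ¬ bundleSet G head (p 0) ∪ bundleSet G head (p (2 * k + 1)) ⊆ W := by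
  intro hsub
  have hnotW : ∀ i, i < 2 * k + 1 → Even i → s(p i, p (i + 1)) ∉ W :=
    fun i hi heven hW => Nat.not_odd_iff_even.2 heven ((hpW i hi).1 hW)
  rcases head_eq_of_adj hefx.1 (hp.adj 0 (by omega)) with h | h
  · exact hnotW 0 (by omega) ⟨0, rfl⟩ (hsub (.inl ⟨hp.adj 0 (by omega), h⟩))
  · exact hnotW (2 * k) (by omega) (even_two_mul k) (hsub (.inr ⟨hp.adj (2 * k) (by omega),
      hefx.head_thread_of_even hp hpW h (by omega) (even_two_mul k)⟩))

lemma IsEFXOrientation.bundleSet_subset_of_closed_thread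
    (hefx : IsEFXOrientation G (fun x => hitValuation (W ∩ G.incidenceSet x)) head)
    {q : ℕ → V} {j : ℕ} (hj : Even j) (hq : IsThread G q (j + 3))
    (hqW : ∀ i < j + 3, s(q i, q (i + 1)) ∈ W ↔ Even i) {a : V} (hq0 : q 0 = a)
    (hq3 : q (j + 3) = a)
    (ha : ∀ e ∈ G.incidenceSet a, e ∈ W → e = s(q 0, q 1) ∨ e = s(q (j + 2), q (j + 3))) :
    bundleSet G head a ⊆ W := by
  intro E hE
  by_contra hEW
  have hnotW : ∀ i < j + 3, Odd i → s(q i, q (i + 1)) ∉ W :=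
    fun i hi hodd hW => Nat.not_even_iff_odd.2 hodd ((hqW i hi).1 hW)
  have hadj₀ : G.Adj a (q 1) := hq0 ▸ hq.adj 0 (by omega)
  have hadj₁ : G.Adj a (q (j + 2)) := (hq3 ▸ hq.adj (j + 2) (by omega)).symm
  have hW₀ : s(a, q 1) ∈ W := hq0 ▸ (hqW 0 (by omega)).2 ⟨0, rfl⟩
  have hW₁ : s(a, q (j + 2)) ∈ W := by
    rw [Sym2.eq_swap, ← hq3]; exact (hqW (j + 2) (by omega)).2 (hj.add even_two)
  have hnotW₁ : s(q (j + 2), q (j + 1)) ∉ W := by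
    rw [Sym2.eq_swap]; exact hnotW (j + 1) (by omega) hj.add_one
  have hhead₀ : head s(a, q 1) = q 1 :=
    hefx.head_eq_right_of_mem_bundleSet hE hEW hadj₀ hW₀
      (by simpa [hq0] using hq.incidenceSet_subset 0 (by omega)) (hnotW 1 (by omega) odd_one)
  have hhead₁ : head s(a, q (j + 2)) = q (j + 2) := by
    refine hefx.head_eq_right_of_mem_bundleSet hE hEW hadj₁ hW₁ ?_ hnotW₁
    intro f hf
    rcases hq.incidenceSet_subset (j + 1) (by omega) hf with rfl | rfl
    · exact .inr (Sym2.eq_swap)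
    · exact .inl (by rw [Sym2.eq_swap, ← hq3])
  have hdisj : Disjoint (bundleSet G head a) W := by
    refine Set.disjoint_left.2 fun f hf hfW => ?_
    rcases ha f (bundleSet_subset_incidenceSet hefx.1 a hf) hfW with rfl | rfl
    · rw [hq0] at hf; exact hadj₀.ne (hf.2.symm.trans hhead₀)
    · rw [hq3, Sym2.eq_swap] at hf; exact hadj₁.ne (hf.2.symm.trans hhead₁)
  have hhead₂ : head s(q 1, q 2) = q 2 :=
    hefx.head_eq_right_of_disjoint hdisj hadj₀ hW₀ hhead₀ (hq.adj 1 (by omega))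
      (hnotW 1 (by omega) odd_one)
  have hhead₃ : head s(q (j + 2), q (j + 1)) = q (j + 1) :=
    hefx.head_eq_right_of_disjoint hdisj hadj₁ hW₁ hhead₁ (hq.adj (j + 1) (by omega)).symm
      hnotW₁
  have hchain : head s(q (j + 1), q (j + 2)) = q (j + 2) :=
    hefx.head_thread_of_even hq.tail
      (fun i hi => (hqW (i + 1) (by omega)).trans (Nat.even_add_one.trans Nat.not_even_iff_odd))
      hhead₂ (by omega) hj
  rw [Sym2.eq_swap] at hhead₃
  exact (hq.adj (j + 1) (by omega)).ne (hhead₃.symm.trans hchain)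

end EFX

section Cycles

variable {k : ℕ} {c : ZMod k → V}

lemma mem_range_of_mem_cycleEdges {e : Sym2 V} (he : e ∈ cycleEdges c) {y : V} (hy : y ∈ e) :
    y ∈ Set.range c := by
  obtain ⟨x, rfl⟩ := he
  rcases Sym2.mem_iff.1 hy with rfl | rfl
  exacts [⟨x, rfl⟩, ⟨x + 1, rfl⟩]

lemma eq_or_eq_of_mem_cycleEdges (hc : Function.Injective c) {e : Sym2 V}
    (he : e ∈ cycleEdges c) {x : ZMod k} (hx : c x ∈ e) :
    e = s(c (x - 1), c x) ∨ e = s(c x, c (x + 1)) := by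
  obtain ⟨y, rfl⟩ := he
  rcases Sym2.mem_iff.1 hx with h | h
  · exact .inr (by rw [hc h])
  · exact .inl (by rw [hc h, add_sub_cancel_right])

lemma cycleEdge_injective (hc : Function.Injective c) (hk : 3 ≤ k) {x y : ZMod k}
    (h : s(c x, c (x + 1)) = s(c y, c (y + 1))) : x = y := by
  rcases Sym2.eq_iff.1 h with ⟨h, -⟩ | ⟨h₁, h₂⟩
  · exact hc h
  · have h2 : ((2 : ℕ) : ZMod k) = 0 := by
      rw [Nat.cast_ofNat]
      linear_combination hc h₂ - hc h₁
    rw [ZMod.natCast_eq_zero_iff] at h2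
    exact absurd (Nat.le_of_dvd two_pos h2) (by omega)

lemma natCast_eq_neg_one {i : ℕ} (hi : i + 1 = k) : (i : ZMod k) = -1 := by
  rw [eq_neg_iff_add_eq_zero, ← Nat.cast_add_one, hi, ZMod.natCast_self]

lemma disjoint_cycleEdges_diagSet (hc : Function.Injective c)
    (hk : k ≠ 1) : Disjoint (cycleEdges c) Sym2.diagSet := by
  refine Set.disjoint_left.2 ?_
  rintro _ ⟨x, rfl⟩ hdiag
  have h10 : ((1 : ℕ) : ZMod k) = 0 := by
    rw [Nat.cast_one]
    simpa using (hc (Sym2.mk_isDiag_iff.1 hdiag)).symm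
  rw [ZMod.natCast_eq_zero_iff, Nat.dvd_one] at h10
  exact hk h10

lemma cycleEdges_comp_add (c : ZMod k → V) (x : ZMod k) :
    cycleEdges (fun i => c (x + i)) = cycleEdges c := by
  simp only [cycleEdges, ← add_assoc]
  exact (add_left_surjective x).range_comp fun i => s(c i, c (i + 1))

def cyclePath (c : ZMod k → V) (i : ℕ) : V := c i

@[simp] lemma cyclePath_zero : cyclePath c 0 = c 0 := by simp [cyclePath]

@[simp] lemma cyclePath_self : cyclePath c k = c 0 := by simp [cyclePath]

lemma cyclePath_edge_mem_cycleEdges (i : ℕ) :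
    s(cyclePath c i, cyclePath c (i + 1)) ∈ cycleEdges c :=
  ⟨i, by simp [cyclePath]⟩

lemma isThread_cyclePath {G : SimpleGraph V} (hc : Function.Injective c)
    (hG : cycleEdges c ⊆ G.edgeSet) (hinc : ∀ x ≠ 0, G.incidenceSet (c x) ⊆ cycleEdges c) :
    IsThread G (cyclePath c) k := by
  refine ⟨fun i _ => hG (cyclePath_edge_mem_cycleEdges i), fun i hi e he => ?_⟩
  have hx : ((i + 1 : ℕ) : ZMod k) ≠ 0 := by
    rw [Ne, ZMod.natCast_eq_zero_iff]
    exact fun h => absurd (Nat.le_of_dvd (by omega) h) (by omega)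
  rcases eq_or_eq_of_mem_cycleEdges hc (hinc _ hx he) he.2 with rfl | rfl
  · exact .inl (by simp [cyclePath])
  · exact .inr (by simp [cyclePath, add_assoc, one_add_one_eq_two])

lemma cyclePath_edge_mem_image_union_iff (hc : Function.Injective c) (hk : 3 ≤ k)
    {P : ℕ → Prop} {S : Set (Sym2 V)} (hS : Disjoint (cycleEdges c) S) {i : ℕ} (hi : i < k) :
    s(cyclePath c i, cyclePath c (i + 1)) ∈
      (fun j => s(cyclePath c j, cyclePath c (j + 1))) '' {j | j < k ∧ P j} ∪ S ↔ P i := by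
  refine ⟨?_, fun hP => .inl ⟨i, ⟨hi, hP⟩, rfl⟩⟩
  rintro (⟨j, ⟨hj, hPj⟩, hji⟩ | hiS)
  · have hji' : (j : ZMod k) = i := cycleEdge_injective hc hk (by simpa [cyclePath] using hji)
    have := congrArg ZMod.val hji'
    rw [ZMod.val_cast_of_lt hj, ZMod.val_cast_of_lt hi] at this
    exact this ▸ hPj
  · exact absurd hiS (Set.disjoint_left.1 hS (cyclePath_edge_mem_cycleEdges i))

lemma eq_or_eq_of_mem_cycleEdges_zero (hc : Function.Injective c) {e : Sym2 V}
    (he : e ∈ cycleEdges c) (h0 : c 0 ∈ e) {i : ℕ} (hi : i + 1 = k) :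
    e = s(cyclePath c 0, cyclePath c 1) ∨ e = s(cyclePath c i, cyclePath c (i + 1)) := by
  rcases eq_or_eq_of_mem_cycleEdges hc he h0 with rfl | rfl
  · exact .inr (by rw [hi, cyclePath_self, cyclePath, natCast_eq_neg_one hi, zero_sub])
  · exact .inl (by simp [cyclePath])

lemma isThread_cyclePath_fromEdgeSet_union (hc : Function.Injective c) (hk : k ≠ 1)
    {S : Set (Sym2 V)} (hS : ∀ e ∈ S, ∀ x ≠ 0, c x ∉ e) :
    IsThread (fromEdgeSet (cycleEdges c ∪ S)) (cyclePath c) k := by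
  refine isThread_cyclePath hc ?_ fun x hx e ⟨he, hxe⟩ => ?_
  · rw [edgeSet_fromEdgeSet]
    exact Set.subset_sdiff.2 ⟨Set.subset_union_left, disjoint_cycleEdges_diagSet hc hk⟩
  · rw [edgeSet_fromEdgeSet] at he
    exact he.1.resolve_right fun heS => hS e heS x hx hxe

end Cycles

theorem not_stronglyEFXOrientable_of_oddCycles_through_zero [Fintype V] {m n : ℕ}
    (hm : Odd m) (hm3 : 3 ≤ m) (hn : Odd n) (hn3 : 3 ≤ n) {u : ZMod m → V} {v : ZMod n → V}
    (hu : Function.Injective u) (hv : Function.Injective v) (h0 : u 0 = v 0)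
    (hvert : Set.range u ∩ Set.range v = {u 0}) (hedge : cycleEdges u ∩ cycleEdges v = ∅) :
    ¬ StronglyEFXOrientable (fromEdgeSet (cycleEdges u ∪ cycleEdges v)) := by
  intro hS
  set G := fromEdgeSet (cycleEdges u ∪ cycleEdges v)
  have hdisj : Disjoint (cycleEdges u) (cycleEdges v) := Set.disjoint_iff_inter_eq_empty.2 hedge
  have hGe : G.edgeSet ⊆ cycleEdges u ∪ cycleEdges v := by
    rw [edgeSet_fromEdgeSet]; exact Set.sdiff_subset
  have hshared : ∀ y ∈ Set.range u, y ∈ Set.range v → y = u 0 := fun y hyu hyv =>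
    (Set.ext_iff.1 hvert y).1 ⟨hyu, hyv⟩
  have hp : IsThread G (cyclePath u) m :=
    isThread_cyclePath_fromEdgeSet_union hu (by omega) fun e he x hx hxe =>
      hx (hu (hshared _ ⟨x, rfl⟩ (mem_range_of_mem_cycleEdges he hxe)))
  have hq : IsThread G (cyclePath v) n := by
    rw [show G = fromEdgeSet (cycleEdges v ∪ cycleEdges u) by rw [Set.union_comm]]
    exact isThread_cyclePath_fromEdgeSet_union hv (by omega) fun e he x hx hxe =>
      hx (hv (h0 ▸ hshared _ (mem_range_of_mem_cycleEdges he hxe) ⟨x, rfl⟩))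
  set Wu := (fun i => s(cyclePath u i, cyclePath u (i + 1))) '' {i | i < m ∧ Odd i}
  set Wv := (fun i => s(cyclePath v i, cyclePath v (i + 1))) '' {i | i < n ∧ Even i}
  have hWu : Wu ⊆ cycleEdges u := by
    rintro _ ⟨i, -, rfl⟩; exact cyclePath_edge_mem_cycleEdges i
  have hWv : Wv ⊆ cycleEdges v := by
    rintro _ ⟨i, -, rfl⟩; exact cyclePath_edge_mem_cycleEdges i
  have hpW : ∀ i < m, s(cyclePath u i, cyclePath u (i + 1)) ∈ Wu ∪ Wv ↔ Odd i :=
    fun i hi => cyclePath_edge_mem_image_union_iff hu hm3 (hdisj.mono_right hWv) hi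
  have hqW : ∀ i < n, s(cyclePath v i, cyclePath v (i + 1)) ∈ Wu ∪ Wv ↔ Even i := fun i hi => by
    rw [Set.union_comm]
    exact cyclePath_edge_mem_image_union_iff hv hn3 (hdisj.symm.mono_right hWu) hi
  obtain ⟨head, hefx⟩ := hS.exists_isEFXOrientation_hitValuation (Wu ∪ Wv)
  obtain ⟨K, rfl⟩ := hm
  obtain ⟨j, rfl⟩ : ∃ j, n = j + 3 := ⟨n - 3, by omega⟩
  have hj : Even j := by obtain ⟨r, hr⟩ := hn; exact ⟨r - 1, by omega⟩
  refine hefx.not_bundleSet_union_subset_of_odd_thread hp hpW ?_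
  rw [cyclePath_zero, cyclePath_self, Set.union_self]
  refine hefx.bundleSet_subset_of_closed_thread hj hq hqW (by simp [h0]) (by simp [h0])
    fun e he heW => ?_
  rcases hGe he.1 with heu | hev
  · exfalso
    rcases eq_or_eq_of_mem_cycleEdges_zero hu heu he.2 (i := 2 * K) rfl with rfl | rfl
    · exact Nat.not_odd_zero ((hpW 0 (by omega)).1 heW)
    · exact Nat.not_odd_iff_even.2 (even_two_mul K) ((hpW (2 * K) (by omega)).1 heW)
  · exact eq_or_eq_of_mem_cycleEdges_zero hv hev (h0 ▸ he.2) rfl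

/-- The union of two odd cycles whose intersection is exactly one vertex
(they share exactly one vertex and no edges) is not strongly EFX-orientable. -/
theorem not_stronglyEFXOrientable_oddCycles_sharing_vertex [Fintype V] (G : SimpleGraph V)
    (m n : ℕ) (hm : Odd m) (hm3 : 3 ≤ m) (hn : Odd n) (hn3 : 3 ≤ n)
    (c₁ : ZMod m → V) (c₂ : ZMod n → V)
    (hc₁ : Function.Injective c₁) (hc₂ : Function.Injective c₂)
    (a : V) (hvert : Set.range c₁ ∩ Set.range c₂ = {a})
    (hedge : cycleEdges c₁ ∩ cycleEdges c₂ = ∅)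
    (hG : G = SimpleGraph.fromEdgeSet (cycleEdges c₁ ∪ cycleEdges c₂)) :
    ¬ StronglyEFXOrientable G := by
  obtain ⟨⟨x₁, hx₁⟩, ⟨x₂, hx₂⟩⟩ : a ∈ Set.range c₁ ∩ Set.range c₂ := hvert ▸ rfl
  have hrange : ∀ {k : ℕ} (c : ZMod k → V) (x : ZMod k),
      Set.range (fun i => c (x + i)) = Set.range c :=
    fun c x => (add_left_surjective x).range_comp c
  subst hG
  rw [← cycleEdges_comp_add c₁ x₁, ← cycleEdges_comp_add c₂ x₂] at hedge ⊢
  refine not_stronglyEFXOrientable_of_oddCycles_through_zero hm hm3 hn hn3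
    (hc₁.comp (add_right_injective x₁)) (hc₂.comp (add_right_injective x₂)) ?_ ?_ hedge
  · simp [hx₁, hx₂]
  · simpa [hrange, hx₁] using hvert
end

section
/- Let G be a finite simple connected bipartite graph with at least 4 vertices such that G remains connected after the deletion of any single vertex (G is 2-connected). Let u and v be two distinct non-adjacent vertices lying in the same partite set of G, and let G + e be the graph obtained by adding the edge e = uv. Then G + e is not strongly EFX-orientable. -/
open SimpleGraph
open scoped Classical

variable {V : Type*}

/-!
By Whitney's theorem `u` and `v` lie on a cycle of `G`. Since `u` and `v` have the same colour,
both arcs of the cycle between them have even length, so the cycle has a perfect matching `M`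
(the odd edges of each arc, counted from its start) in which `u` and `v` are matched along
different arcs. Let each vertex value a bundle by the largest weight of its goods, where its
`M`-edge weighs `2` and, for `u` and `v`, the added edge `e = uv` weighs `1`.

In an EFX orientation every `M`-edge is the whole bundle of its owner, since the other endpoint
values it above everything it can own. Hence along an arc, once its first edge is not owned by
its start, ownership is forced edge by edge and the end of the arc owns exactly its `M`-edge.
If `e` goes to `u`, then either `u` owns only `e`, and the arc from `u` forces `v` to own its
`M`-edge, or `v` envies `e` and must own its `M`-edge anyway. Either way the arc from `v` then
forces `u` to own only its `M`-edge, which contradicts `e` being in `u`'s bundle.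
-/

namespace SimpleGraph.Walk

variable {G : SimpleGraph V} {x y : V}

def InternallyDisjoint {u v : V} (P Q : G.Walk u v) : Prop :=
  ∀ t ∈ P.support, t ∈ Q.support → t = u ∨ t = v

lemma InternallyDisjoint.symm {u v : V} {P Q : G.Walk u v} (h : P.InternallyDisjoint Q) :
    Q.InternallyDisjoint P :=
  fun t hQ hP => h t hP hQ

lemma exists_walk_to_first_mem (p : G.Walk x y) {S : Set V} (hy : y ∈ S) :
    ∃ z ∈ S, ∃ q : G.Walk x z,
      q.support ⊆ p.support ∧ ∀ t ∈ q.support, t ∈ S → t = z := by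
  induction p with
  | nil => exact ⟨_, hy, nil, fun _ h => h, by simp⟩
  | @cons a b y h p ih =>
    by_cases ha : a ∈ S
    · exact ⟨a, ha, nil, by simp, by simp⟩
    obtain ⟨z, hz, q, hqp, hq⟩ := ih hy
    refine ⟨z, hz, cons h q, List.cons_subset_cons _ hqp, fun t ht htS => ?_⟩
    rcases List.mem_cons.mp ht with rfl | ht
    · exact absurd htS ha
    · exact hq t ht htS

/-- The new paths are `P` up to `z` followed by `R` backwards, and `Q` followed by the edge `wv`. -/
lemma InternallyDisjoint.exists_extend {u w v z : V} {P Q : G.Walk u w}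
    (hPQ : P.InternallyDisjoint Q) (hP : P.IsPath) (hvw : G.Adj v w) (R : G.Walk v z)
    (hzP : z ∈ P.support) (hzw : z ≠ w)
    (hR : ∀ t ∈ R.support, t ∈ P.support ∨ t ∈ Q.support → t = z) :
    ∃ P' Q' : G.Walk u v, P'.IsPath ∧ Q'.IsPath ∧ P'.InternallyDisjoint Q' := by
  refine ⟨((P.takeUntil z hzP).append R.reverse).bypass, (Q.concat hvw.symm).bypass,
    bypass_isPath _, bypass_isPath _, fun t ht ht' => ?_⟩
  replace ht := support_bypass_subset_support _ ht
  replace ht' := support_bypass_subset_support _ ht'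
  rw [support_append, support_reverse, List.mem_append] at ht
  rw [support_concat, List.mem_append, List.mem_singleton] at ht'
  rcases ht' with htQ | rfl
  · rcases ht with htP | htR
    · rcases hPQ t (support_takeUntil_subset_support _ _ htP) htQ with rfl | rfl
      · exact Or.inl rfl
      · exact absurd htP (endpoint_notMem_support_takeUntil hP hzP hzw.symm)
    · obtain rfl := hR t (List.mem_reverse.mp (List.mem_of_mem_tail htR)) (Or.inr htQ)
      rcases hPQ t hzP htQ with rfl | rfl
      · exact Or.inl rfl
      · exact absurd rfl hzw
  · exact Or.inr rfl

/-- Whitney's theorem, by induction along a walk `v w … u`: given two internally disjoint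
`u`–`w` paths, a walk from `v` to `u` avoiding `w` first meets them at some `z ≠ w`, which lets
`v` be attached. -/
lemma exists_internallyDisjoint_of_walk (h2 : ∀ x : V, (G.induce {y | y ≠ x}).Connected)
    {u v : V} (p : G.Walk v u) (huv : u ≠ v) :
    ∃ P Q : G.Walk u v, P.IsPath ∧ Q.IsPath ∧ P.InternallyDisjoint Q := by
  induction p with
  | nil => exact absurd rfl huv
  | @cons v w u hvw p ih =>
    by_cases huw : u = w
    · subst huw
      have hpath : (cons hvw.symm nil : G.Walk u v).IsPath := by simpa using huv
      exact ⟨_, _, hpath, hpath, fun t ht _ => by simpa using ht⟩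
    obtain ⟨P, Q, hP, hQ, hPQ⟩ := ih huw
    obtain ⟨W₀⟩ := (h2 w).preconnected ⟨v, hvw.ne⟩ ⟨u, huw⟩
    set W := W₀.map (Embedding.induce {y | y ≠ w}).toHom
    have hwW : w ∉ W.support := by
      rw [support_map, List.mem_map]
      rintro ⟨t, -, ht⟩
      exact t.2 ht
    obtain ⟨z, hzS, R, hRW, hR⟩ := W.exists_walk_to_first_mem
      (S := {t | t ∈ P.support ∨ t ∈ Q.support}) (Or.inl P.start_mem_support)
    have hzw : z ≠ w := fun h => hwW (hRW (h ▸ R.end_mem_support))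
    rcases hzS with hzP | hzQ
    · exact hPQ.exists_extend hP hvw R hzP hzw hR
    · exact hPQ.symm.exists_extend hQ hvw R hzQ hzw
        fun t ht htS => hR t ht htS.symm

def oddEdgeSet (p : G.Walk x y) : Set (Sym2 V) :=
  {g | ∃ k, 2 * k + 1 < p.length ∧ g = s(p.getVert (2 * k + 1), p.getVert (2 * k + 2))}

lemma oddEdgeSet_subset_edgeSet (p : G.Walk x y) : p.oddEdgeSet ⊆ G.edgeSet := by
  rintro _ ⟨k, hk, rfl⟩
  exact p.adj_getVert_succ hk

lemma exists_length_eq_two_mul_add_two (p : G.Walk x y) (hxy : x ≠ y) (hp : Even p.length) :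
    ∃ k, p.length = 2 * k + 2 := by
  obtain ⟨_ | k, hk⟩ := hp
  · exact absurd (eq_of_length_eq_zero hk) hxy
  · exact ⟨k, by omega⟩

lemma IsPath.getVert_ne {p : G.Walk x y} (hp : p.IsPath) {i j : ℕ} (hi : i ≤ p.length)
    (hj : j ≤ p.length) (hij : i ≠ j) : p.getVert i ≠ p.getVert j :=
  fun h => hij (hp.getVert_injOn hi hj h)

lemma IsPath.eq_of_mem_oddEdge {p : G.Walk x y} (hp : p.IsPath) {k l : ℕ} {t : V}
    (hk : 2 * k + 1 < p.length) (hl : 2 * l + 1 < p.length)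
    (htk : t ∈ s(p.getVert (2 * k + 1), p.getVert (2 * k + 2)))
    (htl : t ∈ s(p.getVert (2 * l + 1), p.getVert (2 * l + 2))) : k = l := by
  rw [Sym2.mem_iff] at htk htl
  by_contra hkl
  rcases htk with rfl | rfl <;> rcases htl with h | h <;>
    exact hp.getVert_ne (by omega) (by omega) (by omega) h

lemma IsPath.start_notMem_oddEdgeSet {p : G.Walk x y} (hp : p.IsPath) {m : Sym2 V}
    (hm : m ∈ p.oddEdgeSet) : x ∉ m := by
  obtain ⟨k, hk, rfl⟩ := hm
  rw [Sym2.mem_iff]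
  rintro (h | h) <;> refine hp.getVert_ne ?_ ?_ ?_ (p.getVert_zero.trans h) <;> omega

end SimpleGraph.Walk

section MaxWeight

variable [Fintype V]

noncomputable def maxWeight (w : V → Sym2 V → ℕ) (x : V) (X : Set (Sym2 V)) : ℕ :=
  (Finset.univ.filter (· ∈ X)).sup (w x)

noncomputable def maxValuation (w : V → Sym2 V → ℕ) (x : V) (X : Set (Sym2 V)) : NNReal :=
  maxWeight w x X

variable {w : V → Sym2 V → ℕ} {x : V} {X : Set (Sym2 V)}

lemma le_maxWeight {g : Sym2 V} (hg : g ∈ X) : w x g ≤ maxWeight w x X :=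
  Finset.le_sup (Finset.mem_filter.mpr ⟨Finset.mem_univ g, hg⟩)

lemma maxWeight_lt_iff {c : ℕ} (hc : 0 < c) : maxWeight w x X < c ↔ ∀ g ∈ X, w x g < c := by
  simp [maxWeight, Finset.sup_lt_iff hc]

lemma monotone_maxWeight : Monotone (maxWeight w x) :=
  fun _ _ hXY => Finset.sup_mono fun g hg =>
    Finset.mem_filter.mpr ⟨Finset.mem_univ g, hXY (Finset.mem_filter.mp hg).2⟩

lemma maxWeight_inter_incidenceSet {H : SimpleGraph V}
    (hw : ∀ x g, w x g ≠ 0 → g ∈ H.incidenceSet x) :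
    maxWeight w x (X ∩ H.incidenceSet x) = maxWeight w x X := by
  refine le_antisymm (monotone_maxWeight Set.inter_subset_left) (Finset.sup_le fun g hg => ?_)
  by_cases h0 : w x g = 0
  · simp [h0]
  · exact le_maxWeight ⟨(Finset.mem_filter.mp hg).2, hw x g h0⟩

lemma StronglyEFXOrientable.exists_isEFXOrientation_maxValuation {H : SimpleGraph V}
    (hH : StronglyEFXOrientable H) (hw : ∀ x g, w x g ≠ 0 → g ∈ H.incidenceSet x) :
    ∃ head, IsEFXOrientation H (maxValuation w) head :=
  hH _ (fun _ _ _ hXY => Nat.cast_le.mpr (monotone_maxWeight hXY))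
    (fun _ _ => by rw [maxValuation, maxValuation, maxWeight_inter_incidenceSet hw])

lemma IsEFXOrientation.eq_singleton_of_maxWeight_lt {H : SimpleGraph V} {head : Sym2 V → V}
    (hefx : IsEFXOrientation H (maxValuation w) head) {y : V} {g : Sym2 V}
    (hg : g ∈ bundleSet H head y) (hlt : maxWeight w x (bundleSet H head x) < w x g) :
    bundleSet H head y = {g} := by
  refine Set.eq_singleton_iff_unique_mem.mpr ⟨hg, fun g' hg' => by_contra fun hne => ?_⟩
  have hefx' : maxWeight w x (bundleSet H head y \ {g'}) ≤ maxWeight w x (bundleSet H head x) :=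
    Nat.cast_le.mp (hefx.2 x y g' hg')
  have hgy : w x g ≤ maxWeight w x (bundleSet H head y \ {g'}) :=
    le_maxWeight ⟨hg, fun h => hne h.symm⟩
  exact (hgy.trans hefx').not_gt hlt

end MaxWeight

section Orientation

variable {H : SimpleGraph V} {head : Sym2 V → V}

lemma head_eq_right_of_ne_left (hor : ∀ e ∈ H.edgeSet, head e ∈ e) {y z : V} (hyz : H.Adj y z)
    (hne : head s(y, z) ≠ y) : head s(y, z) = z :=
  (Sym2.mem_iff.mp (hor _ hyz)).resolve_left hne

/-- Writing `vᵢ` for `p.getVert i`: owning `s(v₂ₖ, v₂ₖ₊₁)` keeps `v₂ₖ₊₁` from owning the odd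
edge `s(v₂ₖ₊₁, v₂ₖ₊₂)`, whose owner `v₂ₖ₊₂` holds nothing else and so does not own the next
edge `s(v₂ₖ₊₂, v₂ₖ₊₃)`. -/
lemma SimpleGraph.Walk.IsPath.head_oddEdge_eq {x y : V} {p : H.Walk x y} (hp : p.IsPath)
    (hor : ∀ e ∈ H.edgeSet, head e ∈ e)
    (hM : ∀ m ∈ p.oddEdgeSet, bundleSet H head (head m) = {m})
    (hstart : head s(x, p.getVert 1) ≠ x) {k : ℕ} (hk : 2 * k + 1 < p.length) :
    head s(p.getVert (2 * k + 1), p.getVert (2 * k + 2)) = p.getVert (2 * k + 2) := by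
  set c := p.getVert
  have hadj : ∀ i < p.length, H.Adj (c i) (c (i + 1)) := fun i hi => p.adj_getVert_succ hi
  have hodd : ∀ k, 2 * k + 1 < p.length → head s(c (2 * k), c (2 * k + 1)) ≠ c (2 * k) →
      head s(c (2 * k + 1), c (2 * k + 2)) = c (2 * k + 2) := by
    intro k hk hev
    refine head_eq_right_of_ne_left hor (hadj _ hk) fun hm => ?_
    have hX := hM _ ⟨k, hk, rfl⟩
    rw [hm] at hX
    have hmem : s(c (2 * k), c (2 * k + 1)) ∈ bundleSet H head (c (2 * k + 1)) :=
      ⟨hadj _ (by omega), head_eq_right_of_ne_left hor (hadj _ (by omega)) hev⟩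
    rw [hX, Set.mem_singleton_iff] at hmem
    refine hp.getVert_ne ?_ ?_ ?_ (Sym2.congr_right.mp (Sym2.eq_swap.trans hmem)) <;> omega
  have heven : ∀ k, 2 * k + 2 < p.length →
      head s(c (2 * k + 1), c (2 * k + 2)) = c (2 * k + 2) →
      head s(c (2 * k + 2), c (2 * k + 3)) ≠ c (2 * k + 2) := by
    intro k hk hm hev
    have hX := hM _ ⟨k, by omega, rfl⟩
    rw [hm] at hX
    have hmem : s(c (2 * k + 2), c (2 * k + 3)) ∈ bundleSet H head (c (2 * k + 2)) :=
      ⟨hadj _ (by omega), hev⟩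
    rw [hX, Set.mem_singleton_iff] at hmem
    refine hp.getVert_ne ?_ ?_ ?_ (Sym2.congr_right.mp (Sym2.eq_swap.trans hmem.symm)) <;> omega
  have hfirst : ∀ k, 2 * k + 1 < p.length → head s(c (2 * k), c (2 * k + 1)) ≠ c (2 * k) := by
    intro k
    induction k with
    | zero => intro _; simpa [c] using hstart
    | succ k ih => intro hk; exact heven k (by omega) (hodd k (by omega) (ih (by omega)))
  exact hodd k hk (hfirst k hk)

end Orientation

section MatchingWeight

def IsMatchingSet (M : Set (Sym2 V)) : Prop :=
  ∀ m ∈ M, ∀ m' ∈ M, ∀ x ∈ m, x ∈ m' → m = m'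

noncomputable def matchingWeight (M : Set (Sym2 V)) (e : Sym2 V) (x : V) (g : Sym2 V) : ℕ :=
  if x ∈ g then (if g ∈ M then 2 else if g = e then 1 else 0) else 0

variable {M : Set (Sym2 V)} {e m g : Sym2 V} {x : V}

lemma matchingWeight_ne_zero (h : matchingWeight M e x g ≠ 0) :
    x ∈ g ∧ (g ∈ M ∨ g = e) := by
  unfold matchingWeight at h
  split_ifs at h <;> simp_all

lemma matchingWeight_of_mem (hm : m ∈ M) (hx : x ∈ m) : matchingWeight M e x m = 2 := by
  simp [matchingWeight, hm, hx]

lemma one_le_matchingWeight (hx : x ∈ e) : 1 ≤ matchingWeight M e x e := by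
  unfold matchingWeight
  split_ifs <;> simp_all

lemma matchingWeight_le_one (hM : IsMatchingSet M) (hm : m ∈ M) (hx : x ∈ m) (hg : g ≠ m) :
    matchingWeight M e x g ≤ 1 := by
  unfold matchingWeight
  split_ifs with hxg hgM
  · exact absurd (hM g hgM m hm x hxg hx) hg
  all_goals omega

lemma isMatchingSet_oddEdgeSet_union {G : SimpleGraph V} {u v : V} {a : G.Walk v u}
    {b : G.Walk u v} (ha : a.IsPath) (hb : b.IsPath)
    (hab : ∀ t ∈ a.support, t ∈ b.support → t = u ∨ t = v) :
    IsMatchingSet (a.oddEdgeSet ∪ b.oddEdgeSet) := by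
  have cross : ∀ m ∈ a.oddEdgeSet, ∀ m' ∈ b.oddEdgeSet, ∀ t ∈ m, t ∉ m' := by
    rintro _ ⟨k, hk, rfl⟩ _ ⟨l, hl, rfl⟩ t htk htl
    have hta : t ∈ a.support := by
      rcases Sym2.mem_iff.mp htk with rfl | rfl <;> exact a.getVert_mem_support _
    have htb : t ∈ b.support := by
      rcases Sym2.mem_iff.mp htl with rfl | rfl <;> exact b.getVert_mem_support _
    rcases hab t hta htb with rfl | rfl
    · exact hb.start_notMem_oddEdgeSet ⟨l, hl, rfl⟩ htl
    · exact ha.start_notMem_oddEdgeSet ⟨k, hk, rfl⟩ htk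
  rintro m (hm | hm) m' (hm' | hm') t htm htm'
  · obtain ⟨k, hk, rfl⟩ := hm
    obtain ⟨l, hl, rfl⟩ := hm'
    rw [ha.eq_of_mem_oddEdge hk hl htm htm']
  · exact absurd htm' (cross m hm m' hm' t htm)
  · exact absurd htm (cross m' hm' m hm t htm')
  · obtain ⟨k, hk, rfl⟩ := hm
    obtain ⟨l, hl, rfl⟩ := hm'
    rw [hb.eq_of_mem_oddEdge hk hl htm htm']

variable [Fintype V] {H : SimpleGraph V} {head : Sym2 V → V}

/-- The endpoint of a matched edge that does not own it values it above its whole bundle. -/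
lemma IsEFXOrientation.bundleSet_head_eq_singleton
    (hefx : IsEFXOrientation H (maxValuation (matchingWeight M e)) head) (hM : IsMatchingSet M)
    (hm : m ∈ M) (hmH : m ∈ H.edgeSet) : bundleSet H head (head m) = {m} := by
  have hy : head m ∈ m := hefx.1 m hmH
  set x := Sym2.Mem.other hy
  have hxm : x ∈ m := Sym2.other_mem hy
  have hxy : x ≠ head m := Sym2.other_ne (H.not_isDiag_of_mem_edgeSet hmH) hy
  refine hefx.eq_singleton_of_maxWeight_lt (x := x) ⟨hmH, rfl⟩ ?_
  rw [matchingWeight_of_mem hm hxm, maxWeight_lt_iff two_pos]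
  intro g hg
  refine Nat.lt_succ_of_le (matchingWeight_le_one hM hm hxm ?_)
  rintro rfl
  exact hxy hg.2.symm

/-- `v` envies the owner `u` of `e` unless it owns its matched edge `m`. -/
lemma IsEFXOrientation.mem_bundleSet_of_ne_singleton
    (hefx : IsEFXOrientation H (maxValuation (matchingWeight M e)) head) (hM : IsMatchingSet M)
    (hm : m ∈ M) {u v : V} (hvm : v ∈ m) (hve : v ∈ e) (he : e ∈ bundleSet H head u)
    (huv : u ≠ v) (hXu : bundleSet H head u ≠ {e}) : m ∈ bundleSet H head v := by
  obtain ⟨g, hg, hvg⟩ : ∃ g ∈ bundleSet H head v, 1 ≤ matchingWeight M e v g := by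
    by_contra! h
    exact hXu (hefx.eq_singleton_of_maxWeight_lt he
      (((maxWeight_lt_iff one_pos).mpr h).trans_le (one_le_matchingWeight hve)))
  obtain ⟨hvg', hgM | rfl⟩ := matchingWeight_ne_zero (by omega : matchingWeight M e v g ≠ 0)
  · rwa [← hM g hgM m hm v hvg' hvm]
  · exact absurd (hg.2.symm.trans he.2) huv.symm

end MatchingWeight


section EvenPaths

variable [Fintype V] {H : SimpleGraph V} {head : Sym2 V → V}

lemma IsEFXOrientation.head_ne_of_even_paths {M : Set (Sym2 V)} {u v : V}
    {a : H.Walk v u} {b : H.Walk u v}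
    (hefx : IsEFXOrientation H (maxValuation (matchingWeight M s(u, v))) head)
    (hM : IsMatchingSet M) (hMH : M ⊆ H.edgeSet) (haM : a.oddEdgeSet ⊆ M)
    (hbM : b.oddEdgeSet ⊆ M) (ha : a.IsPath) (hb : b.IsPath) {k l : ℕ}
    (hka : a.length = 2 * k + 2) (hlb : b.length = 2 * l + 2) (huv : H.Adj u v) :
    head s(u, v) ≠ u := by
  set X := bundleSet H head
  have hau : a.getVert (2 * k + 2) = u := hka ▸ a.getVert_length
  have hbv : b.getVert (2 * l + 2) = v := hlb ▸ b.getVert_length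
  set mu := s(a.getVert (2 * k + 1), a.getVert (2 * k + 2))
  set mv := s(b.getVert (2 * l + 1), b.getVert (2 * l + 2))
  have hmu : mu ∈ a.oddEdgeSet := ⟨k, by omega, rfl⟩
  have hmv : mv ∈ b.oddEdgeSet := ⟨l, by omega, rfl⟩
  have hsingle : ∀ m ∈ M, X (head m) = {m} :=
    fun m hm => hefx.bundleSet_head_eq_singleton hM hm (hMH hm)
  have hlegA : head s(v, a.getVert 1) ≠ v → head mu = u := fun h =>
    hau ▸ ha.head_oddEdge_eq hefx.1 (fun m hm => hsingle m (haM hm)) h (by omega)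
  have hlegB : head s(u, b.getVert 1) ≠ u → head mv = v := fun h =>
    hbv ▸ hb.head_oddEdge_eq hefx.1 (fun m hm => hsingle m (hbM hm)) h (by omega)
  intro hu
  have he : s(u, v) ∈ X u := ⟨huv, hu⟩
  have hv : head mv = v := by
    by_cases hXu : X u = {s(u, v)}
    · refine hlegB fun h => ?_
      have hb1 : s(u, b.getVert 1) ∈ X u :=
        ⟨by simpa using b.adj_getVert_succ (i := 0) (by omega), h⟩
      rw [hXu, Set.mem_singleton_iff, Sym2.congr_right] at hb1
      exact hb.getVert_ne (by omega) (by omega) (by omega) (hb1.trans hbv.symm)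
    · exact (hefx.mem_bundleSet_of_ne_singleton hM (hbM hmv) (hbv ▸ Sym2.mem_mk_right _ _)
        (Sym2.mem_mk_right u v) he huv.ne hXu).2
  have hstartA : head s(v, a.getVert 1) ≠ v := fun h => by
    have ha1 : s(v, a.getVert 1) ∈ X v :=
      ⟨by simpa using a.adj_getVert_succ (i := 0) (by omega), h⟩
    have hXv := hsingle mv (hbM hmv)
    rw [hv] at hXv
    rw [hXv, Set.mem_singleton_iff] at ha1
    have hmv' : mv = s(a.getVert 1, a.getVert 2) :=
      hM mv (hbM hmv) _ (haM ⟨0, by omega, rfl⟩) (a.getVert 1) (ha1 ▸ Sym2.mem_mk_right _ _)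
        (Sym2.mem_mk_left _ _)
    exact ha.start_notMem_oddEdgeSet ⟨0, by omega, rfl⟩ (hmv' ▸ hbv ▸ Sym2.mem_mk_right _ _)
  have hXu := hsingle mu (haM hmu)
  rw [hlegA hstartA] at hXu
  rw [hXu, Set.mem_singleton_iff] at he
  exact ha.start_notMem_oddEdgeSet hmu (he ▸ Sym2.mem_mk_right u v)

theorem not_stronglyEFXOrientable_of_adj_of_even_paths {u v : V} (huv : H.Adj u v)
    {P Q : H.Walk u v} (hP : P.IsPath) (hQ : Q.IsPath) (hPe : Even P.length) (hQe : Even Q.length)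
    (hPQ : P.InternallyDisjoint Q) : ¬ StronglyEFXOrientable H := by
  intro hH
  obtain ⟨k, hk⟩ := P.reverse.exists_length_eq_two_mul_add_two huv.ne.symm
    (by rwa [Walk.length_reverse])
  obtain ⟨l, hl⟩ := Q.exists_length_eq_two_mul_add_two huv.ne hQe
  set M := P.reverse.oddEdgeSet ∪ Q.oddEdgeSet
  have hM : IsMatchingSet M :=
    isMatchingSet_oddEdgeSet_union hP.reverse hQ fun t ht => hPQ t (by simpa using ht)
  have hMH : M ⊆ H.edgeSet :=
    Set.union_subset P.reverse.oddEdgeSet_subset_edgeSet Q.oddEdgeSet_subset_edgeSet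
  obtain ⟨head, hefx⟩ := hH.exists_isEFXOrientation_maxValuation
    (w := matchingWeight M s(u, v)) fun x g hg => by
      obtain ⟨hxg, hgM | rfl⟩ := matchingWeight_ne_zero hg
      exacts [⟨hMH hgM, hxg⟩, ⟨huv, hxg⟩]
  rcases Sym2.mem_iff.mp (hefx.1 _ huv) with hu | hv
  · exact hefx.head_ne_of_even_paths hM hMH Set.subset_union_left Set.subset_union_right
      hP.reverse hQ hk hl huv hu
  · rw [Sym2.eq_swap] at hefx hv
    exact hefx.head_ne_of_even_paths hM hMH Set.subset_union_right Set.subset_union_left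
      hQ hP.reverse hl hk huv.symm hv

end EvenPaths

theorem not_stronglyEFXOrientable_bipartite_plus_edge_general [Fintype V] (G : SimpleGraph V)
    (hconn : G.Connected)
    (h2conn : ∀ x : V, (G.induce {y | y ≠ x}).Connected)
    (C : G.Coloring (Fin 2)) (u v : V) (huv : u ≠ v)
    (hsame : C u = C v) :
    ¬ StronglyEFXOrientable (G ⊔ SimpleGraph.fromEdgeSet {s(u, v)}) := by
  have hle : G ≤ G ⊔ fromEdgeSet {s(u, v)} := le_sup_left
  have hadj : (G ⊔ fromEdgeSet {s(u, v)}).Adj u v := by simp [huv]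
  have heven (R : G.Walk u v) : Even (R.mapLe hle).length := by
    rw [Walk.length_mapLe, (G.recolorOfEquiv finTwoEquiv C).even_length_iff_congr]
    simp [hsame]
  obtain ⟨P, Q, hP, hQ, hPQ⟩ :=
    Walk.exists_internallyDisjoint_of_walk h2conn (hconn.preconnected v u).some huv
  refine not_stronglyEFXOrientable_of_adj_of_even_paths hadj (hP.mapLe hle) (hQ.mapLe hle)
    (heven P) (heven Q) ?_
  simpa [Walk.InternallyDisjoint, Walk.support_mapLe_eq_support] using hPQ

/-- Let `G` be a finite simple connected bipartite graph on at least 4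
vertices that stays connected after deleting any single vertex, and let `u, v` be distinct
non-adjacent vertices in the same partite set (i.e. with the same color under a proper
2-coloring `C`). Then the graph obtained by adding the edge `uv` is not strongly
EFX-orientable. -/
theorem not_stronglyEFXOrientable_bipartite_plus_edge [Fintype V] (G : SimpleGraph V)
    (hcard : 4 ≤ Fintype.card V) (hconn : G.Connected)
    (h2conn : ∀ x : V, (G.induce {y | y ≠ x}).Connected)
    (C : G.Coloring (Fin 2)) (u v : V) (huv : u ≠ v) (hnadj : ¬ G.Adj u v)
    (hsame : C u = C v) :
    ¬ StronglyEFXOrientable (G ⊔ SimpleGraph.fromEdgeSet {s(u, v)}) :=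
  not_stronglyEFXOrientable_bipartite_plus_edge_general G hconn h2conn C u v huv hsame
end
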